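/- Let n ≥ 2 be an integer, s ∈ (0,1), M > 0, let E := {x ∈ ℝⁿ : |x_n| > M} and q := (0,…,0,−M). Then for every ε ∈ (0, 2M), ∫_{{y ∈ ℝⁿ : |y−q| > ε}} (χ_{Eᶜ}(y) − χ_E(y)) |y−q|^{−(n+s)} dy = − ∫_{{z ∈ ℝⁿ : |z_n| ≥ 2M}} |z|^{−(n+s)} dz, which is a strictly negative real number. In particular, the principal value nonlocal mean curvature H_s(E, q) exists and is strictly negative, so the complement of the slab does not satisfy the vanishing nonlocal mean curvature equation at q. -/

import Mathlib

open MeasureTheory Set Filter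
open scoped ENNReal

/-- The last coordinate `x_n` of a point `x = (x', x_n) ∈ ℝⁿ`. -/
noncomputable def lastCoord {n : ℕ} (x : EuclideanSpace ℝ (Fin n)) : ℝ :=
  if h : 0 < n then x ⟨n - 1, by omega⟩ else 0

/-- The projection `x ↦ x'` onto the first `n-1` coordinates. -/
noncomputable def projFirst {n : ℕ} (x : EuclideanSpace ℝ (Fin n)) :
    EuclideanSpace ℝ (Fin (n - 1)) :=
  (EuclideanSpace.equiv (Fin (n - 1)) ℝ).symm fun i => x (Fin.castLE (Nat.sub_le n 1) i)

/-- The truncated nonlocal mean curvature integral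
`∫_{|y−p|>ε} (χ_{Fᶜ}(y) − χ_F(y)) |y−p|^{−(n+s)} dy`. -/
noncomputable def nmcAt (n : ℕ) (s : ℝ) (F : Set (EuclideanSpace ℝ (Fin n)))
    (p : EuclideanSpace ℝ (Fin n)) (ε : ℝ) : ℝ :=
  ∫ y in {y : EuclideanSpace ℝ (Fin n) | ε < ‖y - p‖},
    (Set.indicator Fᶜ (fun _ => (1 : ℝ)) y - Set.indicator F (fun _ => (1 : ℝ)) y) *
      ‖y - p‖ ^ (-((n : ℝ) + s))

/-- The nonlocal mean curvature of `F` at `p` exists (as a principal value as `ε → 0⁺`)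
and equals `h`. -/
def HasNMC (n : ℕ) (s : ℝ) (F : Set (EuclideanSpace ℝ (Fin n)))
    (p : EuclideanSpace ℝ (Fin n)) (h : ℝ) : Prop :=
  Filter.Tendsto (nmcAt n s F p) (nhdsWithin 0 (Set.Ioi 0)) (nhds h)

namespace SlabNMCAux

variable {n : ℕ}

lemma abs_apply_le_norm (x : EuclideanSpace ℝ (Fin n)) (i : Fin n) : |x i| ≤ ‖x‖ := by
  rw [EuclideanSpace.norm_eq, ← Real.sqrt_sq (abs_nonneg (x i))]
  apply Real.sqrt_le_sqrt
  calc |x i| ^ 2 = ‖x i‖ ^ 2 := by rw [Real.norm_eq_abs]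
    _ ≤ ∑ j, ‖x j‖ ^ 2 := Finset.single_le_sum (f := fun j => ‖x j‖ ^ 2) (fun j _ => sq_nonneg _) (Finset.mem_univ i)

noncomputable def negC (k : Fin n) :
    EuclideanSpace ℝ (Fin n) ≃ₗᵢ[ℝ] EuclideanSpace ℝ (Fin n) :=
  LinearIsometryEquiv.piLpCongrRight 2
    (fun i => if i = k then LinearIsometryEquiv.neg ℝ else LinearIsometryEquiv.refl ℝ ℝ)

lemma negC_apply (k : Fin n) (x : EuclideanSpace ℝ (Fin n)) (i : Fin n) :
    negC k x i = if i = k then -x i else x i := by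
  simp only [negC, LinearIsometryEquiv.piLpCongrRight_apply, PiLp.toLp_apply]
  by_cases h : i = k <;> simp [h]

lemma volume_hyperplane (k : Fin n) (c : ℝ) :
    volume {z : EuclideanSpace ℝ (Fin n) | z k = c} = 0 := by
  let ℓ : EuclideanSpace ℝ (Fin n) →ₗ[ℝ] ℝ :=
    { toFun := fun z => z k, map_add' := fun _ _ => rfl, map_smul' := fun _ _ => rfl }
  have hz : volume {z : EuclideanSpace ℝ (Fin n) | z k = 0} = 0 := by
    have h0 : {z : EuclideanSpace ℝ (Fin n) | z k = 0} = (LinearMap.ker ℓ : Set _) := by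
      ext z; simp [LinearMap.mem_ker, ℓ]; exact Iff.rfl
    rw [h0]
    apply Measure.addHaar_submodule
    intro htop
    have h1 : (EuclideanSpace.single k (1 : ℝ)) ∈ LinearMap.ker ℓ := by
      rw [htop]; trivial
    have h2 : (EuclideanSpace.single k (1 : ℝ)) k = 0 := h1
    rw [EuclideanSpace.single_apply] at h2
    simp at h2
  calc volume {z : EuclideanSpace ℝ (Fin n) | z k = c}
      = volume ((fun z : EuclideanSpace ℝ (Fin n) => z + EuclideanSpace.single k c) ⁻¹'
          {z | z k = c}) := (measure_preimage_add_right _ _ _).symm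
    _ = volume {z : EuclideanSpace ℝ (Fin n) | z k = 0} := by
        congr 1
        ext z
        simp [PiLp.add_apply, EuclideanSpace.single_apply]
    _ = 0 := hz

lemma integrableOn_rpow_norm {r : ℝ} (hr : (n : ℝ) < r) {ε : ℝ} (hε : 0 < ε) :
    IntegrableOn (fun z : EuclideanSpace ℝ (Fin n) => ‖z‖ ^ (-r))
      {z : EuclideanSpace ℝ (Fin n) | ε < ‖z‖} := by
  have hr0 : 0 < r := lt_of_le_of_lt (Nat.cast_nonneg n) hr
  have hrn : (Module.finrank ℝ (EuclideanSpace ℝ (Fin n)) : ℝ) < r := by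
    rwa [finrank_euclideanSpace_fin]
  have hbig : Integrable (fun x : EuclideanSpace ℝ (Fin n) =>
      (1 + ε⁻¹) ^ r * (1 + ‖x‖) ^ (-r)) := (integrable_one_add_norm hrn).const_mul _
  refine Integrable.mono' hbig.integrableOn ?_ ?_
  · exact (Measurable.aestronglyMeasurable (by fun_prop))
  · refine (ae_restrict_iff' (measurableSet_lt measurable_const measurable_norm)).2
      (ae_of_all _ fun z hz => ?_)
    have hz' : ε < ‖z‖ := hz
    have h0 : (0 : ℝ) < ‖z‖ := hε.trans hz'
    have h1 : (0 : ℝ) < 1 + ε⁻¹ := by positivity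
    have hle : 1 + ‖z‖ ≤ (1 + ε⁻¹) * ‖z‖ := by
      have h2 : ε⁻¹ * ε ≤ ε⁻¹ * ‖z‖ :=
        mul_le_mul_of_nonneg_left hz'.le (by positivity)
      rw [inv_mul_cancel₀ hε.ne'] at h2
      nlinarith
    have key : ((1 + ε⁻¹) * ‖z‖) ^ (-r) ≤ (1 + ‖z‖) ^ (-r) :=
      Real.rpow_le_rpow_of_nonpos (by positivity) hle (neg_nonpos.2 hr0.le)
    rw [Real.mul_rpow h1.le (norm_nonneg z)] at key
    rw [Real.norm_of_nonneg (Real.rpow_nonneg (norm_nonneg z) _)]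
    calc ‖z‖ ^ (-r) = (1 + ε⁻¹) ^ r * ((1 + ε⁻¹) ^ (-r) * ‖z‖ ^ (-r)) := by
          rw [← mul_assoc, ← Real.rpow_add h1]; simp
      _ ≤ (1 + ε⁻¹) ^ r * (1 + ‖z‖) ^ (-r) :=
          mul_le_mul_of_nonneg_left key (Real.rpow_nonneg h1.le r)

end SlabNMCAux

set_option maxHeartbeats 1600000 in
open SlabNMCAux in
/-- **The complement of the slab has strictly negative nonlocal mean curvature at
`q = (0,…,0,−M)`.**
Let `E = {|x_n| > M}` and `q = (0,…,0,−M)`. For every `ε ∈ (0, 2M)` the truncated nonlocal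
mean curvature integral equals `−∫_{{|z_n| ≥ 2M}} |z|^{−(n+s)} dz`, a strictly negative number;
in particular the principal value `H_s(E,q)` exists and is strictly negative. -/
theorem slab_complement_nmc_negative
    (n : ℕ) (hn : 2 ≤ n) (s : ℝ) (hs : s ∈ Set.Ioo (0 : ℝ) 1) (M : ℝ) (hM : 0 < M) :
    (∀ ε ∈ Set.Ioo (0 : ℝ) (2 * M),
      nmcAt n s {x : EuclideanSpace ℝ (Fin n) | M < |lastCoord x|}
          (EuclideanSpace.single (⟨n - 1, by omega⟩ : Fin n) (-M)) ε =
        -∫ z in {z : EuclideanSpace ℝ (Fin n) | 2 * M ≤ |lastCoord z|},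
          ‖z‖ ^ (-((n : ℝ) + s))) ∧
    (0 < ∫ z in {z : EuclideanSpace ℝ (Fin n) | 2 * M ≤ |lastCoord z|},
      ‖z‖ ^ (-((n : ℝ) + s))) ∧
    ∃ h : ℝ, HasNMC n s {x : EuclideanSpace ℝ (Fin n) | M < |lastCoord x|}
        (EuclideanSpace.single (⟨n - 1, by omega⟩ : Fin n) (-M)) h ∧ h < 0 := by
  classical
  obtain ⟨hs0, _hs1⟩ := hs
  have hn0 : 0 < n := by omega
  have hM2 : 0 < 2 * M := by linarith
  set k : Fin n := ⟨n - 1, by omega⟩ with hk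
  have hlast : ∀ x : EuclideanSpace ℝ (Fin n), lastCoord x = x k := by
    intro x
    rw [lastCoord, dif_pos hn0]
  set r : ℝ := (n : ℝ) + s with hrdef
  have hnr : (n : ℝ) < r := by rw [hrdef]; linarith
  set g : EuclideanSpace ℝ (Fin n) → ℝ := fun z => ‖z‖ ^ (-r) with hgdef
  have hgnn : ∀ z, 0 ≤ g z := fun z => Real.rpow_nonneg (norm_nonneg z) _
  set A : Set (EuclideanSpace ℝ (Fin n)) := {z | 2 * M ≤ |z k|} with hAdef
  have hAeq : {z : EuclideanSpace ℝ (Fin n) | 2 * M ≤ |lastCoord z|} = A := by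
    ext z
    simp only [hAdef, Set.mem_setOf_eq, hlast z]
  have hmk : Measurable fun z : EuclideanSpace ℝ (Fin n) => z k :=
    (EuclideanSpace.proj k : EuclideanSpace ℝ (Fin n) →L[ℝ] ℝ).continuous.measurable
  have hck : Continuous fun z : EuclideanSpace ℝ (Fin n) => z k :=
    (EuclideanSpace.proj k : EuclideanSpace ℝ (Fin n) →L[ℝ] ℝ).continuous
  have hAmeas : MeasurableSet A := measurableSet_le measurable_const hmk.abs
  have hgmeas : Measurable g := by rw [hgdef]; fun_prop
  have hAsub : ∀ {z : EuclideanSpace ℝ (Fin n)}, z ∈ A → 2 * M ≤ ‖z‖ :=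
    fun {z} hz => le_trans hz (abs_apply_le_norm z k)
  have hIntA : IntegrableOn g A := by
    refine (integrableOn_rpow_norm hnr hM).mono_set fun z hz => ?_
    exact lt_of_lt_of_le (by linarith) (hAsub hz)
  have hpos : 0 < ∫ z in A, g z := by
    rw [setIntegral_pos_iff_support_of_nonneg_ae (ae_of_all _ fun z => hgnn z) hIntA]
    have hU : IsOpen {z : EuclideanSpace ℝ (Fin n) | 2 * M < z k} :=
      isOpen_lt continuous_const hck
    have hUsub : {z : EuclideanSpace ℝ (Fin n) | 2 * M < z k} ⊆ Function.support g ∩ A := by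
      intro z hz
      have h1 : 2 * M ≤ |z k| := le_trans (le_of_lt hz) (le_abs_self _)
      have h2 : (0 : ℝ) < ‖z‖ := lt_of_lt_of_le hM2 (le_trans h1 (abs_apply_le_norm z k))
      exact ⟨ne_of_gt (Real.rpow_pos_of_pos h2 _), h1⟩
    refine lt_of_lt_of_le ?_ (measure_mono hUsub)
    refine hU.measure_pos volume ⟨EuclideanSpace.single k (3 * M), ?_⟩
    show 2 * M < (EuclideanSpace.single k (3 * M)) k
    rw [EuclideanSpace.single_apply, if_pos rfl]
    linarith
  set B : Set (EuclideanSpace ℝ (Fin n)) := {z | M < |z k - M|} with hBdef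
  have hBmeas : MeasurableSet B := measurableSet_lt measurable_const ((hmk.sub_const M).abs)
  set Φ : EuclideanSpace ℝ (Fin n) → ℝ := fun z =>
    (Set.indicator Bᶜ (fun _ => (1 : ℝ)) z - Set.indicator B (fun _ => (1 : ℝ)) z) * g z
    with hΦdef
  set q : EuclideanSpace ℝ (Fin n) := EuclideanSpace.single k (-M) with hqdef
  have hqk : q k = -M := by
    rw [hqdef, EuclideanSpace.single_apply, if_pos rfl]
  set E : Set (EuclideanSpace ℝ (Fin n)) := {x | M < |lastCoord x|} with hEdef
  set R := negC k with hRdef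
  have hRk : ∀ z : EuclideanSpace ℝ (Fin n), R z k = -(z k) := by
    intro z
    rw [hRdef, negC_apply, if_pos rfl]
  have hgR : ∀ z, g (R z) = g z := by
    intro z
    simp only [hgdef]
    rw [R.norm_map]
  have hmemBR : ∀ z : EuclideanSpace ℝ (Fin n), (R z ∈ B ↔ M < |-(z k) - M|) := by
    intro z
    simp only [hBdef, Set.mem_setOf_eq, hRk z]
  have key : ∀ ε ∈ Set.Ioo (0 : ℝ) (2 * M), nmcAt n s E q ε = -∫ z in A, g z := by
    rintro ε ⟨hε0, hε2⟩
    set S : Set (EuclideanSpace ℝ (Fin n)) := {z | ε < ‖z‖} with hSdef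
    have hSmeas : MeasurableSet S := measurableSet_lt measurable_const measurable_norm
    have hmp : MeasurePreserving (fun z : EuclideanSpace ℝ (Fin n) => z + q)
        volume volume := measurePreserving_add_right volume q
    have hemb : MeasurableEmbedding (fun z : EuclideanSpace ℝ (Fin n) => z + q) :=
      (MeasurableEquiv.addRight q).measurableEmbedding
    have hpre : (fun z : EuclideanSpace ℝ (Fin n) => z + q) ⁻¹' {y | ε < ‖y - q‖} = S := by
      ext z
      simp [hSdef]
    have h1 : nmcAt n s E q ε = ∫ z in S, Φ z := by
      rw [nmcAt, ← hmp.setIntegral_preimage_emb hemb, hpre]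
      refine setIntegral_congr_fun hSmeas fun z _ => ?_
      have hzq : (z + q) k = z k - M := by
        rw [PiLp.add_apply, hqk]; ring
      have hmem : z + q ∈ E ↔ z ∈ B := by
        simp only [hEdef, hBdef, Set.mem_setOf_eq, hlast, hzq]
      have hi1 : Set.indicator Eᶜ (fun _ => (1 : ℝ)) (z + q)
          = Set.indicator Bᶜ (fun _ => (1 : ℝ)) z := by
        by_cases h : z ∈ B
        · rw [Set.indicator_of_notMem (Set.notMem_compl_iff.mpr (hmem.mpr h)),
            Set.indicator_of_notMem (Set.notMem_compl_iff.mpr h)]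
        · rw [Set.indicator_of_mem (Set.mem_compl (fun hc => h (hmem.mp hc))),
            Set.indicator_of_mem (Set.mem_compl h)]
      have hi2 : Set.indicator E (fun _ => (1 : ℝ)) (z + q)
          = Set.indicator B (fun _ => (1 : ℝ)) z := by
        by_cases h : z ∈ B
        · rw [Set.indicator_of_mem (hmem.mpr h), Set.indicator_of_mem h]
        · rw [Set.indicator_of_notMem (fun hc => h (hmem.mp hc)),
            Set.indicator_of_notMem h]
      have hnorm : ‖z + q - q‖ = ‖z‖ := by rw [add_sub_cancel_right]
      rw [hi1, hi2, hnorm]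
    have hmpR : MeasurePreserving (⇑R) volume volume := R.measurePreserving
    have hembR : MeasurableEmbedding (⇑R) := R.toHomeomorph.measurableEmbedding
    have hRS : ⇑R ⁻¹' S = S := by
      ext z
      simp only [hSdef, Set.mem_preimage, Set.mem_setOf_eq, R.norm_map]
    have hΦmeas : Measurable Φ :=
      ((measurable_const.indicator hBmeas.compl).sub
        (measurable_const.indicator hBmeas)).mul hgmeas
    have hΦbound : ∀ z, ‖Φ z‖ ≤ g z := by
      intro z
      simp only [hΦdef]
      by_cases h : z ∈ B
      · rw [Set.indicator_of_notMem (Set.notMem_compl_iff.mpr h), Set.indicator_of_mem h]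
        simp [Real.norm_eq_abs, abs_mul, abs_of_nonneg (hgnn z)]
      · rw [Set.indicator_of_mem (Set.mem_compl h), Set.indicator_of_notMem h]
        simp [Real.norm_eq_abs, abs_mul, abs_of_nonneg (hgnn z)]
    have hgS : IntegrableOn g S := integrableOn_rpow_norm hnr hε0
    have hΦint : IntegrableOn Φ S :=
      Integrable.mono' hgS hΦmeas.aestronglyMeasurable (ae_of_all _ hΦbound)
    have hΦRint : IntegrableOn (fun z => Φ (R z)) S :=
      Integrable.mono' hgS (hΦmeas.comp hmpR.measurable).aestronglyMeasurable
        (ae_of_all _ fun z => by rw [← hgR z]; exact hΦbound (R z))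
    have h2 : ∫ z in S, Φ (R z) = ∫ z in S, Φ z := by
      have h := hmpR.setIntegral_preimage_emb hembR Φ S
      rwa [hRS] at h
    have hN : volume ({z : EuclideanSpace ℝ (Fin n) | z k = 0}
        ∪ {z | z k = 2 * M} ∪ {z | z k = -(2 * M)}) = 0 :=
      measure_union_null (measure_union_null (volume_hyperplane k 0)
        (volume_hyperplane k (2 * M))) (volume_hyperplane k (-(2 * M)))
    have hae : ∀ᵐ z ∂(volume.restrict S),
        Φ z + Φ (R z) = A.indicator (fun w => -2 * g w) z := by
      apply ae_restrict_of_ae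
      filter_upwards [measure_eq_zero_iff_ae_notMem.mp hN] with z hz
      simp only [Set.mem_union, Set.mem_setOf_eq, not_or] at hz
      obtain ⟨⟨hz0, hz2⟩, hz2'⟩ := hz
      rcases le_or_gt (2 * M) |z k| with hcase | hcase
      · have habs : 2 * M ≠ |z k| := by
          intro h
          rcases (abs_eq (le_of_lt hM2)).mp h.symm with h' | h'
          exacts [hz2 h', hz2' h']
        have h2M : 2 * M < |z k| := lt_of_le_of_ne hcase habs
        have hb1 : M < |z k - M| := by
          rcases abs_cases (z k) with ⟨e1, e2⟩ | ⟨e1, e2⟩ <;>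
            rcases abs_cases (z k - M) with ⟨e3, e4⟩ | ⟨e3, e4⟩ <;> linarith
        have hb2 : M < |-(z k) - M| := by
          rcases abs_cases (z k) with ⟨e1, e2⟩ | ⟨e1, e2⟩ <;>
            rcases abs_cases (-(z k) - M) with ⟨e3, e4⟩ | ⟨e3, e4⟩ <;> linarith
        have hz1 : z ∈ B := hb1
        have hz2B : R z ∈ B := (hmemBR z).mpr hb2
        have hzA : z ∈ A := hcase
        rw [Set.indicator_of_mem hzA]
        simp only [hΦdef]
        rw [Set.indicator_of_notMem (Set.notMem_compl_iff.mpr hz1), Set.indicator_of_mem hz1,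
          Set.indicator_of_notMem (Set.notMem_compl_iff.mpr hz2B), Set.indicator_of_mem hz2B,
          hgR z]
        ring
      · have hzA : z ∉ A := fun h => absurd hcase (not_lt.mpr h)
        rw [Set.indicator_of_notMem hzA]
        rcases lt_trichotomy (z k) 0 with ht | ht | ht
        · have habs : -(z k) < 2 * M := by
            rcases abs_cases (z k) with ⟨e1, _⟩ | ⟨e1, _⟩ <;> linarith
          have hb1 : M < |z k - M| := by
            rcases abs_cases (z k - M) with ⟨e3, e4⟩ | ⟨e3, e4⟩ <;> linarith
          have hb2 : ¬ M < |-(z k) - M| :=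
            not_lt.mpr (abs_le.mpr ⟨by linarith, by linarith⟩)
          have hz1 : z ∈ B := hb1
          have hz2B : R z ∉ B := fun hc => hb2 ((hmemBR z).mp hc)
          simp only [hΦdef]
          rw [Set.indicator_of_notMem (Set.notMem_compl_iff.mpr hz1), Set.indicator_of_mem hz1,
            Set.indicator_of_mem (Set.mem_compl hz2B), Set.indicator_of_notMem hz2B, hgR z]
          ring
        · exact absurd ht hz0
        · have habs : z k < 2 * M := by
            rcases abs_cases (z k) with ⟨e1, _⟩ | ⟨e1, _⟩ <;> linarith
          have hb1 : ¬ M < |z k - M| :=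
            not_lt.mpr (abs_le.mpr ⟨by linarith, by linarith⟩)
          have hb2 : M < |-(z k) - M| := by
            rcases abs_cases (-(z k) - M) with ⟨e3, e4⟩ | ⟨e3, e4⟩ <;> linarith
          have hz1 : z ∉ B := hb1
          have hz2B : R z ∈ B := (hmemBR z).mpr hb2
          simp only [hΦdef]
          rw [Set.indicator_of_mem (Set.mem_compl hz1), Set.indicator_of_notMem hz1,
            Set.indicator_of_notMem (Set.notMem_compl_iff.mpr hz2B), Set.indicator_of_mem hz2B,
            hgR z]
          ring
    have h3 : ∫ z in S, (Φ z + Φ (R z)) = ∫ z in S, A.indicator (fun w => -2 * g w) z :=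
      integral_congr_ae hae
    have h4 : ∫ z in S, A.indicator (fun w => -2 * g w) z = ∫ z in S ∩ A, -2 * g z :=
      setIntegral_indicator hAmeas
    have hSA : S ∩ A = A := by
      apply Set.inter_eq_right.mpr
      intro z hz
      exact lt_of_lt_of_le hε2 (hAsub hz)
    have h5 : ∫ z in S, (Φ z + Φ (R z)) = -2 * ∫ z in A, g z := by
      rw [h3, h4, hSA, integral_const_mul]
    have h6 : ∫ z in S, (Φ z + Φ (R z)) = 2 * ∫ z in S, Φ z := by
      rw [integral_add hΦint hΦRint, h2]; ring
    rw [h1]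
    have h7 : 2 * ∫ z in S, Φ z = -2 * ∫ z in A, g z := by rw [← h6, h5]
    linarith
  refine ⟨?_, ?_, ?_⟩
  · intro ε hε
    rw [hAeq]
    exact key ε hε
  · rw [hAeq]
    exact hpos
  · refine ⟨-∫ z in A, g z, ?_, by linarith⟩
    have htends : Filter.Tendsto (nmcAt n s E q) (nhdsWithin 0 (Set.Ioi 0))
        (nhds (-∫ z in A, g z)) := by
      refine Filter.Tendsto.congr' ?_ tendsto_const_nhds
      filter_upwards [Ioo_mem_nhdsGT_of_mem ⟨le_refl (0 : ℝ), hM2⟩] with ε hε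
      exact (key ε hε).symm
    exact htends
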